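/- arXiv:2311.01791 — 2 statements merged into one kernel-verified Lean document; each statement's English description precedes it below -/
import Mathlib

section
/- For every integer n ≥ 3, the element P := 6x_{n,1}³x_{n,3} − 3x_{n,1}²x_{n,2}² − 18x_{n,0}x_{n,1}x_{n,2}x_{n,3} + 9x_{n,0}²x_{n,3}² + 8x_{n,0}x_{n,2}³ of R_n satisfies x_{n,0}²·P = x̄_{n,3}² − x̄_{n,2}³ and D_n(P) = 0, but P does not belong to the ℚ-subalgebra of R_n generated by {x̄_{n,k} : 2 ≤ k ≤ n}. -/
open MvPolynomial

noncomputable section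

/-- `R n` is the polynomial ring `ℚ[x_{n,0}, …, x_{n,n}]`. -/
abbrev R (n : ℕ) : Type := MvPolynomial (Fin (n + 1)) ℚ

/-- The variable `x_{n,k}` of `R n` (and `0` for out-of-range indices, which never occur below). -/
def x (n k : ℕ) : R n := if h : k < n + 1 then X ⟨k, h⟩ else 0

/-- The derivation `D_n = Σ_{k=0}^{n-1} x_{n,k} ∂/∂x_{n,k+1}`, i.e. the unique `ℚ`-linear
derivation with `D_n(x_{n,k}) = x_{n,k-1}` for `1 ≤ k ≤ n` and `D_n(x_{n,0}) = 0`. -/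
def D (n : ℕ) : Derivation ℚ (R n) (R n) :=
  MvPolynomial.mkDerivation ℚ fun j : Fin (n + 1) =>
    if (j : ℕ) = 0 then 0 else x n ((j : ℕ) - 1)

/-- `x̄_{n,2ℓ} := x_{n,ℓ}² + 2 Σ_{i=0}^{ℓ−1} (−1)^{ℓ+i} x_{n,i} x_{n,2ℓ−i}`. -/
def xbarE (n l : ℕ) : R n :=
  x n l ^ 2 + 2 * ∑ i ∈ Finset.range l, (-1 : R n) ^ (l + i) * x n i * x n (2 * l - i)

/-- `x̂_{n,2ℓ+1} := x_{n,ℓ}x_{n,ℓ+1} + Σ_{i=0}^{ℓ−1} (−1)^{ℓ+i}(2ℓ−2i+1) x_{n,i} x_{n,2ℓ+1−i}`. -/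
def xhatO (n l : ℕ) : R n :=
  x n l * x n (l + 1) +
    ∑ i ∈ Finset.range l,
      (-1 : R n) ^ (l + i) * ((2 * l - 2 * i + 1 : ℕ) : R n) * x n i * x n (2 * l + 1 - i)

/-- `x̄_{n,2ℓ+1} := x_{n,1}·x̄_{n,2ℓ} − x_{n,0}·x̂_{n,2ℓ+1}`. -/
def xbarO (n l : ℕ) : R n := x n 1 * xbarE n l - x n 0 * xhatO n l

/-- `x̄_{n,k}` for `k ≥ 2` (even or odd case). -/
def xbar (n k : ℕ) : R n := if k % 2 = 0 then xbarE n (k / 2) else xbarO n (k / 2)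


/-- The element `P := 6x₁³x₃ − 3x₁²x₂² − 18x₀x₁x₂x₃ + 9x₀²x₃² + 8x₀x₂³` of `R_n`. -/
def P (n : ℕ) : R n :=
  6 * x n 1 ^ 3 * x n 3 - 3 * x n 1 ^ 2 * x n 2 ^ 2 - 18 * x n 0 * x n 1 * x n 2 * x n 3
    + 9 * x n 0 ^ 2 * x n 3 ^ 2 + 8 * x n 0 * x n 2 ^ 3


/-! ### Auxiliary material for the proof -/

section Aux

lemma aux_npow (a b : ℕ) (h : a % 2 = b % 2) : (-1 : ℚ) ^ a = (-1) ^ b := by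
  rw [neg_one_pow_eq_pow_mod_two, h, ← neg_one_pow_eq_pow_mod_two]

lemma aux_sum_three (M : ℕ) (f : ℕ → ℚ) (hf : ∀ i, i % 3 ≠ 0 → f i = 0) :
    ∑ i ∈ Finset.range (3 * M + 1), f i = ∑ m ∈ Finset.range (M + 1), f (3 * m) := by
  have h1 : ∑ m ∈ Finset.range (M + 1), f (3 * m)
      = ∑ i ∈ (Finset.range (M + 1)).image (fun m => 3 * m), f i :=
    (Finset.sum_image (by intro a _ b _ h; omega)).symm
  rw [h1]
  apply (Finset.sum_subset ?_ ?_).symm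
  · intro a ha
    simp only [Finset.mem_image, Finset.mem_range] at *
    obtain ⟨m, hm, rfl⟩ := ha; omega
  · intro a ha hna
    apply hf
    intro h3
    apply hna
    simp only [Finset.mem_image, Finset.mem_range] at *
    exact ⟨a / 3, by omega, by omega⟩

lemma aux_alt_fact (N : ℕ) (hN : 1 ≤ N) :
    ∑ m ∈ Finset.range (N + 1),
      (-1 : ℚ) ^ m * ((m.factorial : ℚ)⁻¹ * (((N - m).factorial : ℚ))⁻¹) = 0 := by
  have key : ∀ m ∈ Finset.range (N + 1),
      (-1 : ℚ) ^ m * ((m.factorial : ℚ)⁻¹ * (((N - m).factorial : ℚ))⁻¹)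
        = ((N.factorial : ℚ))⁻¹ * ((-1 : ℚ) ^ m * (N.choose m : ℚ)) := by
    intro m hm
    rw [Finset.mem_range] at hm
    have h := Nat.choose_mul_factorial_mul_factorial (Nat.lt_succ_iff.mp hm)
    have h' : ((N.choose m : ℚ)) * m.factorial * (N - m).factorial = N.factorial := by
      exact_mod_cast congrArg (Nat.cast : ℕ → ℚ) h
    have f1 : (m.factorial : ℚ) ≠ 0 := Nat.cast_ne_zero.mpr m.factorial_ne_zero
    have f2 : ((N - m).factorial : ℚ) ≠ 0 := Nat.cast_ne_zero.mpr (N - m).factorial_ne_zero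
    have f3 : (N.factorial : ℚ) ≠ 0 := Nat.cast_ne_zero.mpr N.factorial_ne_zero
    field_simp
    rw [← h']; ring
  rw [Finset.sum_congr rfl key, ← Finset.mul_sum]
  have : ∑ m ∈ Finset.range (N + 1), (-1 : ℚ) ^ m * (N.choose m : ℚ) = 0 := by
    have := Int.alternating_sum_range_choose (n := N)
    rw [if_neg (by omega)] at this
    exact_mod_cast congrArg (Int.cast : ℤ → ℚ) this
  rw [this, mul_zero]

lemma aux_alt_fact_w (N : ℕ) (hN : 2 ≤ N) :
    ∑ m ∈ Finset.range (N + 1),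
      (-1 : ℚ) ^ m * ((N : ℚ) - 2 * m) * ((m.factorial : ℚ)⁻¹ * (((N - m).factorial : ℚ))⁻¹) = 0 := by
  have hsplit : ∀ m ∈ Finset.range (N + 1),
      (-1 : ℚ) ^ m * ((N : ℚ) - 2 * m) * ((m.factorial : ℚ)⁻¹ * (((N - m).factorial : ℚ))⁻¹)
      = (-1 : ℚ) ^ m * ((N : ℚ) - m) * ((m.factorial : ℚ)⁻¹ * (((N - m).factorial : ℚ))⁻¹)
        - (-1 : ℚ) ^ m * (m : ℚ) * ((m.factorial : ℚ)⁻¹ * (((N - m).factorial : ℚ))⁻¹) := by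
    intro m _; ring
  rw [Finset.sum_congr rfl hsplit, Finset.sum_sub_distrib]
  have hA : ∑ m ∈ Finset.range (N + 1),
      (-1 : ℚ) ^ m * ((N : ℚ) - m) * ((m.factorial : ℚ)⁻¹ * (((N - m).factorial : ℚ))⁻¹) = 0 := by
    rw [Finset.sum_range_succ]
    have hlast : (-1 : ℚ) ^ N * ((N : ℚ) - N) * ((N.factorial : ℚ)⁻¹ * (((N - N).factorial : ℚ))⁻¹) = 0 := by
      simp
    rw [hlast, add_zero]
    have hcong : ∀ m ∈ Finset.range N,
        (-1 : ℚ) ^ m * ((N : ℚ) - m) * ((m.factorial : ℚ)⁻¹ * (((N - m).factorial : ℚ))⁻¹)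
        = (-1 : ℚ) ^ m * ((m.factorial : ℚ)⁻¹ * ((((N - 1) - m).factorial : ℚ))⁻¹) := by
      intro m hm
      rw [Finset.mem_range] at hm
      have h1 : N - m = (N - 1 - m) + 1 := by omega
      have h2 : ((N : ℚ) - m) = ((N - m : ℕ) : ℚ) := by
        rw [Nat.cast_sub hm.le]
      rw [h2, h1, Nat.factorial_succ]
      have h3 : ((N - 1 - m) + 1 : ℕ) = N - m := by omega
      push_cast [h3, Nat.cast_sub hm.le]
      have f1 : ((N:ℚ) - m) ≠ 0 := by
        have : (m:ℚ) < N := by exact_mod_cast hm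
        linarith
      have f2 : (((N-1-m).factorial : ℚ)) ≠ 0 := Nat.cast_ne_zero.mpr (Nat.factorial_ne_zero _)
      field_simp
    rw [Finset.sum_congr rfl hcong]
    have := aux_alt_fact (N - 1) (by omega)
    rwa [show N - 1 + 1 = N by omega] at this
  have hB : ∑ m ∈ Finset.range (N + 1),
      (-1 : ℚ) ^ m * (m : ℚ) * ((m.factorial : ℚ)⁻¹ * (((N - m).factorial : ℚ))⁻¹) = 0 := by
    rw [Finset.sum_range_succ']
    simp only [Nat.cast_zero, mul_zero, zero_mul, add_zero, pow_zero]
    have hcong : ∀ m ∈ Finset.range N,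
        (-1 : ℚ) ^ (m + 1) * ((m + 1 : ℕ) : ℚ) * (((m + 1).factorial : ℚ)⁻¹ * (((N - (m + 1)).factorial : ℚ))⁻¹)
        = -((-1 : ℚ) ^ m * ((m.factorial : ℚ)⁻¹ * ((((N - 1) - m).factorial : ℚ))⁻¹)) := by
      intro m hm
      rw [Finset.mem_range] at hm
      have h1 : N - (m + 1) = (N - 1) - m := by omega
      rw [h1, Nat.factorial_succ, pow_succ]
      have f1 : ((m : ℚ) + 1) ≠ 0 := by positivity
      have f2 : ((m.factorial : ℚ)) ≠ 0 := Nat.cast_ne_zero.mpr (Nat.factorial_ne_zero _)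
      push_cast
      field_simp
    rw [Finset.sum_congr rfl hcong, Finset.sum_neg_distrib]
    have := aux_alt_fact (N - 1) (by omega)
    rw [show N - 1 + 1 = N by omega] at this
    rw [this, neg_zero]
  rw [hA, hB, sub_zero]

lemma aux_half_sum (l : ℕ) (g : ℕ → ℚ) (hsym : ∀ i < l, g (2 * l - i) = g i) :
    ∑ i ∈ Finset.range (2 * l + 1), g i = g l + 2 * ∑ i ∈ Finset.range l, g i := by
  have h0 : ∑ i ∈ Finset.range (2 * l + 1), g i
      = ∑ i ∈ Finset.range (l + 1), g i + ∑ i ∈ Finset.Ico (l + 1) (2 * l + 1), g i := by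
    rw [Finset.range_eq_Ico, ← Finset.sum_Ico_consecutive _ (by omega) (by omega : l + 1 ≤ 2 * l + 1),
      ← Finset.range_eq_Ico]
  have h1 : ∑ i ∈ Finset.Ico (l + 1) (2 * l + 1), g i
      = ∑ i ∈ Finset.range l, g (l + 1 + i) := by
    rw [Finset.sum_Ico_eq_sum_range, show 2 * l + 1 - (l + 1) = l by omega]
  have h2 : ∑ i ∈ Finset.range l, g (l + 1 + i) = ∑ i ∈ Finset.range l, g i := by
    rw [← Finset.sum_range_reflect]
    apply Finset.sum_congr rfl
    intro j hj
    rw [Finset.mem_range] at hj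
    have : l + 1 + (l - 1 - j) = 2 * l - j := by omega
    rw [this, hsym j hj]
  rw [h0, h1, h2, Finset.sum_range_succ]
  ring

lemma aux_half_sum' (l : ℕ) (g : ℕ → ℚ) (hsym : ∀ i ≤ l, g (2 * l + 1 - i) = g i) :
    ∑ i ∈ Finset.range (2 * l + 2), g i = 2 * ∑ i ∈ Finset.range (l + 1), g i := by
  have h0 : ∑ i ∈ Finset.range (2 * l + 2), g i
      = ∑ i ∈ Finset.range (l + 1), g i + ∑ i ∈ Finset.Ico (l + 1) (2 * l + 2), g i := by
    rw [Finset.range_eq_Ico, ← Finset.sum_Ico_consecutive _ (by omega) (by omega : l + 1 ≤ 2 * l + 2),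
      ← Finset.range_eq_Ico]
  have h1 : ∑ i ∈ Finset.Ico (l + 1) (2 * l + 2), g i
      = ∑ i ∈ Finset.range (l + 1), g (l + 1 + i) := by
    rw [Finset.sum_Ico_eq_sum_range, show 2 * l + 2 - (l + 1) = l + 1 by omega]
  have h2 : ∑ i ∈ Finset.range (l + 1), g (l + 1 + i) = ∑ i ∈ Finset.range (l + 1), g i := by
    rw [← Finset.sum_range_reflect]
    apply Finset.sum_congr rfl
    intro j hj
    rw [Finset.mem_range] at hj
    have : l + 1 + (l + 1 - 1 - j) = 2 * l + 1 - j := by omega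
    rw [this, hsym j (by omega)]
  rw [h0, h1, h2]
  ring

/-- `w i` is the `i`-th coefficient of `exp(s³/3·t⁻³)·`-type data: `1/m!` at `i = 3m`, else `0`. -/
def w : ℕ → ℚ := fun i => if i % 3 = 0 then ((i / 3).factorial : ℚ)⁻¹ else 0

lemma w_nd {i : ℕ} (h : i % 3 ≠ 0) : w i = 0 := if_neg h

lemma w_mul3 (m : ℕ) : w (3 * m) = ((m.factorial : ℚ))⁻¹ := by
  simp [w, Nat.mul_div_cancel_left, Nat.mul_mod_right]

lemma Qzero (l : ℕ) (hl : 1 ≤ l) :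
    w l ^ 2 + 2 * ∑ i ∈ Finset.range l, (-1 : ℚ) ^ (l + i) * (w i * w (2 * l - i)) = 0 := by
  set g : ℕ → ℚ := fun i => (-1 : ℚ) ^ (l + i) * (w i * w (2 * l - i)) with hg
  have hsym : ∀ i < l, g (2 * l - i) = g i := by
    intro i hi
    simp only [hg]
    rw [show 2 * l - (2 * l - i) = i by omega, aux_npow (l + (2 * l - i)) (l + i) (by omega)]
    ring
  have hmid : g l = w l ^ 2 := by
    simp only [hg]
    rw [show 2 * l - l = l by omega, aux_npow (l + l) 0 (by omega)]
    ring
  have key : ∑ i ∈ Finset.range (2 * l + 1), g i = 0 := by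
    have hvan : ∀ i, i % 3 ≠ 0 → g i = 0 := by
      intro i hi; simp only [hg, w_nd hi]; ring
    by_cases h3 : l % 3 = 0
    · obtain ⟨r, rfl⟩ : ∃ r, l = 3 * r := ⟨l / 3, by omega⟩
      have hr : 1 ≤ r := by omega
      rw [show 2 * (3 * r) + 1 = 3 * (2 * r) + 1 by ring, aux_sum_three (2 * r) g hvan]
      have hcong : ∀ m ∈ Finset.range (2 * r + 1),
          g (3 * m) = ((-1 : ℚ) ^ r) * ((-1 : ℚ) ^ m * ((m.factorial : ℚ)⁻¹ * (((2 * r - m).factorial : ℚ))⁻¹)) := by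
        intro m hm
        rw [Finset.mem_range] at hm
        simp only [hg]
        rw [show 2 * (3 * r) - 3 * m = 3 * (2 * r - m) by omega, w_mul3, w_mul3,
          aux_npow (3 * r + 3 * m) (r + m) (by omega), pow_add]
        ring
      rw [Finset.sum_congr rfl hcong, ← Finset.mul_sum, aux_alt_fact (2 * r) (by omega), mul_zero]
    · apply Finset.sum_eq_zero
      intro i hi
      rw [Finset.mem_range] at hi
      by_cases hi3 : i % 3 = 0
      · have : (2 * l - i) % 3 ≠ 0 := by omega
        simp only [hg, w_nd this]; ring
      · exact hvan i hi3
  rw [aux_half_sum l g hsym, hmid] at key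
  exact key

lemma Hzero (l : ℕ) (hl : 2 ≤ l) :
    w l * w (l + 1) + ∑ i ∈ Finset.range l,
      (-1 : ℚ) ^ (l + i) * ((2 * l - 2 * i + 1 : ℕ) : ℚ) * (w i * w (2 * l + 1 - i)) = 0 := by
  set g : ℕ → ℚ := fun i => (-1 : ℚ) ^ (l + i) * (((2 * l + 1 : ℚ) - 2 * i) * (w i * w (2 * l + 1 - i))) with hg
  have hcast : ∀ i ∈ Finset.range l,
      (-1 : ℚ) ^ (l + i) * ((2 * l - 2 * i + 1 : ℕ) : ℚ) * (w i * w (2 * l + 1 - i)) = g i := by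
    intro i hi
    rw [Finset.mem_range] at hi
    simp only [hg]
    have h2i : 2 * i ≤ 2 * l := by omega
    rw [show ((2 * l - 2 * i + 1 : ℕ) : ℚ) = (2 * l + 1 : ℚ) - 2 * i by push_cast [Nat.cast_sub h2i]; ring]
    ring
  have hsym : ∀ i ≤ l, g (2 * l + 1 - i) = g i := by
    intro i hi
    simp only [hg]
    rw [show 2 * l + 1 - (2 * l + 1 - i) = i by omega,
      aux_npow (l + (2 * l + 1 - i)) (l + i + 1) (by omega),
      show ((2 * l + 1 - i : ℕ) : ℚ) = (2 * l + 1 : ℚ) - i by push_cast [Nat.cast_sub (by omega : i ≤ 2 * l + 1)]; ring,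
      pow_succ]
    ring
  have hmid : g l = w l * w (l + 1) := by
    simp only [hg]
    rw [show 2 * l + 1 - l = l + 1 by omega, aux_npow (l + l) 0 (by omega)]
    ring
  have key : ∑ i ∈ Finset.range (2 * l + 2), g i = 0 := by
    have hvan : ∀ i, i % 3 ≠ 0 → g i = 0 := by
      intro i hi; simp only [hg, w_nd hi]; ring
    by_cases h3 : l % 3 = 1
    · obtain ⟨u, rfl⟩ : ∃ u, l = 3 * u + 1 := ⟨l / 3, by omega⟩
      have hu : 1 ≤ u := by omega
      rw [show 2 * (3 * u + 1) + 2 = 3 * (2 * u + 1) + 1 by ring, aux_sum_three (2 * u + 1) g hvan]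
      have hcong : ∀ m ∈ Finset.range (2 * u + 1 + 1),
          g (3 * m) = (-3 * (-1 : ℚ) ^ u) *
            ((-1 : ℚ) ^ m * (((2 * u + 1 : ℕ) : ℚ) - 2 * m) * ((m.factorial : ℚ)⁻¹ * ((((2 * u + 1) - m).factorial : ℚ))⁻¹)) := by
        intro m hm
        rw [Finset.mem_range] at hm
        simp only [hg]
        rw [show 2 * (3 * u + 1) + 1 - 3 * m = 3 * (2 * u + 1 - m) by omega, w_mul3, w_mul3,
          aux_npow (3 * u + 1 + 3 * m) (u + m + 1) (by omega), pow_add, pow_succ]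
        push_cast
        ring
      rw [Finset.sum_congr rfl hcong, ← Finset.mul_sum, aux_alt_fact_w (2 * u + 1) (by omega), mul_zero]
    · apply Finset.sum_eq_zero
      intro i hi
      rw [Finset.mem_range] at hi
      by_cases hi3 : i % 3 = 0
      · have : (2 * l + 1 - i) % 3 ≠ 0 := by omega
        simp only [hg, w_nd this]; ring
      · exact hvan i hi3
  rw [aux_half_sum' l g hsym, Finset.sum_range_succ, hmid] at key
  rw [Finset.sum_congr rfl hcast]
  linarith [key]

/-- The value substituted for `x_{n,i}`: `w i · X^{1-i}` in `ℚ(X)`. -/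
def v (i : ℕ) : RatFunc ℚ := RatFunc.C (w i) * RatFunc.X ^ ((1 : ℤ) - (i : ℤ))

lemma v_mul (i j : ℕ) : v i * v j = RatFunc.C (w i * w j) * RatFunc.X ^ ((2 : ℤ) - i - j) := by
  simp only [v, map_mul]
  rw [show ((2:ℤ) - i - j) = (1 - i) + (1 - j) by ring, zpow_add₀ RatFunc.X_ne_zero]
  ring

/-- Evaluation of `R n` at the point `(v 0, …, v n)`. -/
def phi (n : ℕ) : R n →ₐ[ℚ] RatFunc ℚ := aeval (fun j : Fin (n+1) => v j)

lemma phi_x {n k : ℕ} (hk : k ≤ n) : phi n (x n k) = v k := by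
  rw [x, dif_pos (by omega : k < n + 1)]
  simp [phi]

lemma phi_xbarE (n l : ℕ) (hl : 1 ≤ l) (h : 2 * l ≤ n) :
    phi n (xbarE n l)
      = RatFunc.C (w l ^ 2 + 2 * ∑ i ∈ Finset.range l, (-1 : ℚ) ^ (l + i) * (w i * w (2 * l - i)))
        * RatFunc.X ^ ((2 : ℤ) - 2 * l) := by
  have hterm : ∀ i ∈ Finset.range l,
      phi n ((-1 : R n) ^ (l + i) * x n i * x n (2 * l - i))
        = RatFunc.C ((-1 : ℚ) ^ (l + i) * (w i * w (2 * l - i))) * RatFunc.X ^ ((2 : ℤ) - 2 * l) := by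
    intro i hi
    rw [Finset.mem_range] at hi
    rw [map_mul, map_mul, map_pow, map_neg, map_one, phi_x (by omega : i ≤ n),
      phi_x (by omega : 2 * l - i ≤ n), mul_assoc, v_mul,
      show ((2:ℤ) - i - (2 * l - i : ℕ)) = (2:ℤ) - 2 * l by push_cast [Nat.cast_sub (by omega : i ≤ 2 * l)]; ring]
    simp only [map_mul, map_pow, map_neg, map_one]
    ring
  rw [xbarE, map_add, map_mul, map_sum, Finset.sum_congr rfl hterm, ← Finset.sum_mul,
    ← map_sum, map_pow, phi_x (by omega : l ≤ n)]
  have hsq : v l ^ 2 = RatFunc.C (w l ^ 2) * RatFunc.X ^ ((2 : ℤ) - 2 * l) := by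
    rw [sq, v_mul, show ((2:ℤ) - l - l) = (2:ℤ) - 2 * l by ring, sq]
  rw [hsq]
  have h2 : phi n (2 : R n) = RatFunc.C (2 : ℚ) := by
    rw [map_ofNat, map_ofNat]
  rw [h2, map_add, map_mul]
  ring

lemma phi_xhatO (n l : ℕ) (hl : 1 ≤ l) (h : 2 * l + 1 ≤ n) :
    phi n (xhatO n l)
      = RatFunc.C (w l * w (l + 1) + ∑ i ∈ Finset.range l,
            (-1 : ℚ) ^ (l + i) * ((2 * l - 2 * i + 1 : ℕ) : ℚ) * (w i * w (2 * l + 1 - i)))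
        * RatFunc.X ^ ((1 : ℤ) - 2 * l) := by
  have hterm : ∀ i ∈ Finset.range l,
      phi n ((-1 : R n) ^ (l + i) * ((2 * l - 2 * i + 1 : ℕ) : R n) * x n i * x n (2 * l + 1 - i))
        = RatFunc.C ((-1 : ℚ) ^ (l + i) * ((2 * l - 2 * i + 1 : ℕ) : ℚ) * (w i * w (2 * l + 1 - i)))
          * RatFunc.X ^ ((1 : ℤ) - 2 * l) := by
    intro i hi
    rw [Finset.mem_range] at hi
    rw [map_mul, map_mul, map_mul, map_pow, map_neg, map_one, map_natCast,
      phi_x (by omega : i ≤ n), phi_x (by omega : 2 * l + 1 - i ≤ n), mul_assoc, v_mul,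
      show ((2:ℤ) - i - (2 * l + 1 - i : ℕ)) = (1:ℤ) - 2 * l by
        push_cast [Nat.cast_sub (by omega : i ≤ 2 * l + 1)]; ring]
    simp only [map_mul, map_pow, map_neg, map_one, map_natCast]
    ring
  rw [xhatO, map_add, map_sum, Finset.sum_congr rfl hterm, ← Finset.sum_mul, ← map_sum,
    map_mul, phi_x (by omega : l ≤ n), phi_x (by omega : l + 1 ≤ n), v_mul,
    show ((2:ℤ) - l - (l + 1 : ℕ)) = (1:ℤ) - 2 * l by push_cast; ring,
    map_add]
  ring

lemma w0 : w 0 = 1 := by simp [w]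
lemma w1 : w 1 = 0 := by simp [w]
lemma w2 : w 2 = 0 := by simp [w]
lemma w3 : w 3 = 1 := by
  have := w_mul3 1
  norm_num at this
  simpa using this

lemma v1 : v 1 = 0 := by simp [v, w1]
lemma v2 : v 2 = 0 := by simp [v, w2]
lemma v0 : v 0 = RatFunc.X ^ (1 : ℤ) := by simp [v, w0]
lemma v3 : v 3 = RatFunc.X ^ (-2 : ℤ) := by
  rw [v, w3]
  norm_num

lemma phi_xbarO (n l : ℕ) (hl : 1 ≤ l) (h : 2 * l + 1 ≤ n) :
    phi n (xbarO n l) = if l = 1 then 3 else 0 := by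
  rw [xbarO, map_sub, map_mul, map_mul, phi_x (by omega : 1 ≤ n), v1, zero_mul, zero_sub,
    phi_x (by omega : 0 ≤ n), phi_xhatO n l hl h, v0]
  rcases eq_or_lt_of_le hl with rfl | hl2
  · rw [if_pos rfl]
    have hs : (w 1 * w (1 + 1) + ∑ i ∈ Finset.range 1,
        (-1 : ℚ) ^ (1 + i) * ((2 * 1 - 2 * i + 1 : ℕ) : ℚ) * (w i * w (2 * 1 + 1 - i))) = -3 := by
      rw [Finset.sum_range_one]
      norm_num [w0, w1, w2, w3]
    rw [hs, show ((1:ℤ) - 2 * (1:ℕ)) = -1 by norm_num,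
      show RatFunc.C (-3 : ℚ) = -3 by simp [map_neg, map_ofNat]]
    have hXX : (RatFunc.X : RatFunc ℚ) ^ (1:ℤ) * (RatFunc.X : RatFunc ℚ) ^ (-1:ℤ) = 1 := by
      rw [← zpow_add₀ (RatFunc.X_ne_zero (K := ℚ))]
      norm_num
    calc -((RatFunc.X : RatFunc ℚ) ^ (1:ℤ) * (-3 * (RatFunc.X : RatFunc ℚ) ^ (-1:ℤ)))
        = 3 * ((RatFunc.X : RatFunc ℚ) ^ (1:ℤ) * (RatFunc.X : RatFunc ℚ) ^ (-1:ℤ)) := by ring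
      _ = 3 := by rw [hXX, mul_one]
  · rw [if_neg (by omega), Hzero l (by omega), map_zero, zero_mul, mul_zero, neg_zero]

lemma phi_P (n : ℕ) (hn : 3 ≤ n) : phi n (P n) = 9 * RatFunc.X ^ (-2 : ℤ) := by
  have hx0 : phi n (x n 0) = v 0 := phi_x (by omega)
  have hx1 : phi n (x n 1) = v 1 := phi_x (by omega)
  have hx2 : phi n (x n 2) = v 2 := phi_x (by omega)
  have hx3 : phi n (x n 3) = v 3 := phi_x (by omega)
  simp only [P, map_add, map_sub, map_mul, map_pow, map_ofNat, hx0, hx1, hx2, hx3, v0, v1, v2, v3]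
  have hXX : (RatFunc.X : RatFunc ℚ) ^ (1:ℤ) * (RatFunc.X : RatFunc ℚ) ^ (1:ℤ)
      * ((RatFunc.X : RatFunc ℚ) ^ (-2:ℤ) * (RatFunc.X : RatFunc ℚ) ^ (-2:ℤ))
      = (RatFunc.X : RatFunc ℚ) ^ (-2:ℤ) := by
    rw [← zpow_add₀ (RatFunc.X_ne_zero (K := ℚ)), ← zpow_add₀ (RatFunc.X_ne_zero (K := ℚ)),
      ← zpow_add₀ (RatFunc.X_ne_zero (K := ℚ))]
    norm_num
  calc (6:RatFunc ℚ) * 0 ^ 3 * RatFunc.X ^ (-2:ℤ) - 3 * 0 ^ 2 * 0 ^ 2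
        - 18 * RatFunc.X ^ (1:ℤ) * 0 * 0 * RatFunc.X ^ (-2:ℤ)
        + 9 * (RatFunc.X ^ (1:ℤ)) ^ 2 * (RatFunc.X ^ (-2:ℤ)) ^ 2
        + 8 * RatFunc.X ^ (1:ℤ) * 0 ^ 3
      = 9 * (RatFunc.X ^ (1:ℤ) * RatFunc.X ^ (1:ℤ)
          * (RatFunc.X ^ (-2:ℤ) * RatFunc.X ^ (-2:ℤ))) := by ring
    _ = 9 * RatFunc.X ^ (-2:ℤ) := by rw [hXX]

lemma phi_xbar_mem (n k : ℕ) (hk2 : 2 ≤ k) (hkn : k ≤ n) :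
    phi n (xbar n k) ∈ (⊥ : Subalgebra ℚ (RatFunc ℚ)) := by
  by_cases hk : k % 2 = 0
  · rw [xbar, if_pos hk, phi_xbarE n (k / 2) (by omega) (by omega), Qzero (k / 2) (by omega),
      map_zero, zero_mul]
    exact zero_mem _
  · rw [xbar, if_neg hk, phi_xbarO n (k / 2) (by omega) (by omega)]
    split_ifs
    · exact Algebra.mem_bot.mpr ⟨3, by norm_num⟩
    · exact zero_mem _

lemma part3 (n : ℕ) (hn : 3 ≤ n) :
    P n ∉ Algebra.adjoin ℚ {p : R n | ∃ k, 2 ≤ k ∧ k ≤ n ∧ p = xbar n k} := by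
  intro hmem
  have hsub : Algebra.adjoin ℚ {p : R n | ∃ k, 2 ≤ k ∧ k ≤ n ∧ p = xbar n k}
      ≤ Subalgebra.comap (phi n) (⊥ : Subalgebra ℚ (RatFunc ℚ)) := by
    rw [Algebra.adjoin_le_iff]
    rintro p ⟨k, hk2, hkn, rfl⟩
    exact phi_xbar_mem n k hk2 hkn
  have hbot : phi n (P n) ∈ (⊥ : Subalgebra ℚ (RatFunc ℚ)) := hsub hmem
  rw [phi_P n hn] at hbot
  obtain ⟨q, hq⟩ := Algebra.mem_bot.mp hbot
  rw [IsScalarTower.algebraMap_apply ℚ (Polynomial ℚ) (RatFunc ℚ)] at hq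
  have hq2 : algebraMap (Polynomial ℚ) (RatFunc ℚ) (algebraMap ℚ (Polynomial ℚ) q * Polynomial.X ^ 2)
      = algebraMap (Polynomial ℚ) (RatFunc ℚ) 9 := by
    rw [map_mul, hq, map_pow, RatFunc.algebraMap_X, map_ofNat]
    have : (RatFunc.X : RatFunc ℚ) ^ (2 : ℕ) = RatFunc.X ^ (2 : ℤ) := by
      rw [← zpow_natCast]; norm_num
    rw [mul_assoc, this, ← zpow_add₀ (RatFunc.X_ne_zero (K := ℚ))]
    norm_num
  have hq3 := RatFunc.algebraMap_injective ℚ hq2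
  rw [show algebraMap ℚ (Polynomial ℚ) q = Polynomial.C q from rfl] at hq3
  have hc := congrArg (fun p => Polynomial.coeff p 0) hq3
  simp [Polynomial.coeff_X_pow, Polynomial.coeff_ofNat_zero] at hc

lemma part1 (n : ℕ) (hn : 3 ≤ n) :
    x n 0 ^ 2 * P n = xbar n 3 ^ 2 - xbar n 2 ^ 3 := by
  have h3 : xbar n 3 = xbarO n 1 := by norm_num [xbar]
  have h2 : xbar n 2 = xbarE n 1 := by norm_num [xbar]
  rw [h3, h2, xbarO, xbarE, xhatO, P, Finset.sum_range_one]
  norm_num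
  ring

lemma Dx (n k : ℕ) (hk : k ≤ n) (hk0 : 1 ≤ k) : D n (x n k) = x n (k - 1) := by
  rw [x, dif_pos (by omega : k < n + 1), D, MvPolynomial.mkDerivation_X]
  simp only []
  rw [if_neg (by simpa using by omega : ¬((⟨k, by omega⟩ : Fin (n+1)) : ℕ) = 0)]

lemma Dx0 (n : ℕ) : D n (x n 0) = 0 := by
  rw [x, dif_pos (by omega : 0 < n + 1), D, MvPolynomial.mkDerivation_X]
  simp

lemma part2 (n : ℕ) (hn : 3 ≤ n) : D n (P n) = 0 := by
  have h0 : D n (x n 0) = 0 := Dx0 n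
  have h1 : D n (x n 1) = x n 0 := Dx n 1 (by omega) (by omega)
  have h2 : D n (x n 2) = x n 1 := Dx n 2 (by omega) (by omega)
  have h3 : D n (x n 3) = x n 2 := Dx n 3 (by omega) (by omega)
  have hP : P n = (6 : ℚ) • (x n 1 ^ 3 * x n 3) - (3 : ℚ) • (x n 1 ^ 2 * x n 2 ^ 2)
      - (18 : ℚ) • (x n 0 * x n 1 * x n 2 * x n 3) + (9 : ℚ) • (x n 0 ^ 2 * x n 3 ^ 2)
      + (8 : ℚ) • (x n 0 * x n 2 ^ 3) := by
    simp only [P, MvPolynomial.smul_eq_C_mul, map_ofNat]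
    ring
  rw [hP]
  simp only [map_add, map_sub, Derivation.map_smul, Derivation.leibniz, Derivation.leibniz_pow,
    h0, h1, h2, h3, smul_eq_mul, nsmul_eq_mul]
  simp only [MvPolynomial.smul_eq_C_mul, map_ofNat]
  push_cast
  ring

end Aux

/-- For every `n ≥ 3`, `P` satisfies `x_{n,0}²·P = x̄_{n,3}² − x̄_{n,2}³` and `D_n(P) = 0`,
but `P` does not belong to the `ℚ`-subalgebra of `R_n` generated by `{x̄_{n,k} : 2 ≤ k ≤ n}`. -/
theorem statement5 (n : ℕ) (hn : 3 ≤ n) :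
    x n 0 ^ 2 * P n = xbar n 3 ^ 2 - xbar n 2 ^ 3 ∧
    D n (P n) = 0 ∧
    P n ∉ Algebra.adjoin ℚ {p : R n | ∃ k, 2 ≤ k ∧ k ≤ n ∧ p = xbar n k} := by
  exact ⟨part1 n hn, part2 n hn, part3 n hn⟩

end
end

section
/- The S-module map S → R_∞^{(2)}/D_∞(R_∞^{(3)}) sending s to the class of s·x_{2,2} is surjective, and its kernel is exactly the ideal of S generated by x_{2,0}² and by the variables x_{n,0} with n ≥ 3; hence R_∞^{(2)}/D_∞(R_∞^{(3)}) ≅ S/(x_{2,0}², x_{n,0} : n ≥ 3) as S-modules. (This is the algebraic form of the theorem that H_st^even(Λ³H̃_ℚ) ≅ (Sym_ℚ(𝓔)/(e₁², e_α, α ≥ 2)){m̄_{0,2}}.) -/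
/-!
In the `S`-stable subspace `D_∞(R_∞^{(3)})` lie `x_{n,2} = D x_{n,3}` (`n ≥ 3`),
`D(x_{n,2} x_{p,1}) = x_{n,1} x_{p,1} + x_{p,0} x_{n,2}` and
`D(x_{2,2} x_{2,1}) = x_{2,1}² + x_{2,0} x_{2,2}`; these reduce every weight-2 monomial to an
`S`-multiple of `x_{2,2}`. Explicit primitives show that `x_{n,0} x_{2,2}` (`n ≥ 3`) and
`x_{2,0}² x_{2,2}` are boundaries.

Conversely, write `∂_k = ∂/∂x_{2,k}`. Then `[∂_0, D] = ∂_1`, `[∂_1, D] = ∂_2`, `[∂_2, D] = 0`,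
and `D` takes values in the augmentation ideal. So if `s x_{2,2} = D g` with `s ∈ S`, then
`s(0) = (∂_2 D g)(0) = 0` and
`(∂_0 s)(0) = (∂_0 ∂_2 D g)(0) = (∂_1 ∂_2 g)(0) = ½ (∂_1² D g)(0) = 0`.
An element of `S` with vanishing constant term and vanishing `x_{2,0}`-coefficient lies in
`(x_{2,0}², x_{n,0} : n ≥ 3)`, because modulo that ideal `S` is spanned by `1` and `x_{2,0}`.
-/

open MvPolynomial

noncomputable section

/-- The index set `{(n,k) : 2 ≤ n, 0 ≤ k ≤ n}` of the variables `x_{n,k}` of `R_∞`. -/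
abbrev Idx : Type := {p : ℕ × ℕ // 2 ≤ p.1 ∧ p.2 ≤ p.1}

/-- The polynomial ring `R_∞ = ℚ[x_{n,k} : n ≥ 2, 0 ≤ k ≤ n]`. -/
abbrev Rinf : Type := MvPolynomial Idx ℚ

/-- The variable `x_{n,k}` (and `0` for out-of-range indices, which never occur below). -/
def xv (n k : ℕ) : Rinf := if h : 2 ≤ n ∧ k ≤ n then X ⟨(n, k), h⟩ else 0

/-- The derivation `D_∞` with `D_∞(x_{n,k}) = x_{n,k−1}` for `1 ≤ k ≤ n` and
`D_∞(x_{n,0}) = 0`. -/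
def Dinf : Derivation ℚ Rinf Rinf :=
  MvPolynomial.mkDerivation ℚ fun s : Idx =>
    if s.1.2 = 0 then 0 else xv s.1.1 (s.1.2 - 1)

/-- The weight `wt(x_{n,k}) = k`. -/
def wt : Idx → ℕ := fun s => s.1.2

/-- `R_∞^{(d)}`: the `ℚ`-span of the monomials of weight `d`. -/
def W (d : ℕ) : Submodule ℚ Rinf := weightedHomogeneousSubmodule ℚ wt d

/-- `S = R_∞^{(0)} = ℚ[x_{n,0} : n ≥ 2]`, as a subalgebra of `R_∞`. -/
def SAlg : Subalgebra ℚ Rinf := Algebra.adjoin ℚ {f : Rinf | ∃ n, 2 ≤ n ∧ f = xv n 0}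

lemma xv0_mem (n : ℕ) : xv n 0 ∈ SAlg := by
  by_cases h : 2 ≤ n
  · exact Algebra.subset_adjoin ⟨n, h, rfl⟩
  · have hz : xv n 0 = 0 := by
      rw [xv, dif_neg]
      exact fun hc => h hc.1
    rw [hz]
    exact Subalgebra.zero_mem _

/-- The element `e_i = x_{i+1,0}` of `S`; below `eS n` denotes `x_{n,0} ∈ S`, so that the
class `e_i` of the paper is `eS (i+1)`. -/
def eS (n : ℕ) : SAlg := ⟨xv n 0, xv0_mem n⟩

lemma xv_eq_X {n k : ℕ} (h : 2 ≤ n ∧ k ≤ n) : xv n k = X ⟨(n, k), h⟩ := dif_pos h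

lemma X_eq_xv (s : Idx) : (X s : Rinf) = xv s.1.1 s.1.2 := (xv_eq_X s.2).symm

lemma xv_of_lt_two {n : ℕ} (k : ℕ) (hn : n < 2) : xv n k = 0 := dif_neg (by omega)

lemma constantCoeff_xv (n k : ℕ) : constantCoeff (xv n k) = 0 := by
  unfold xv; split_ifs <;> simp

lemma xv_mem_W (n k : ℕ) : xv n k ∈ W k := by
  unfold xv; split_ifs
  · exact isWeightedHomogeneous_X ℚ wt _
  · exact isWeightedHomogeneous_zero ℚ wt k

lemma mul_mem_W {a b : Rinf} {i j : ℕ} (ha : a ∈ W i) (hb : b ∈ W j) : a * b ∈ W (i + j) :=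
  IsWeightedHomogeneous.mul ha hb

lemma Dinf_X (s : Idx) : Dinf (X s) = if s.1.2 = 0 then 0 else xv s.1.1 (s.1.2 - 1) :=
  mkDerivation_X _ _ _

lemma Dinf_xv_succ {n k : ℕ} (hk : k < n) : Dinf (xv n (k + 1)) = xv n k := by
  by_cases hn : 2 ≤ n
  · rw [xv_eq_X ⟨hn, hk⟩, Dinf_X]
    simp
  · rw [xv_of_lt_two _ (by omega), xv_of_lt_two _ (by omega), map_zero]

lemma Dinf_xv_zero (n : ℕ) : Dinf (xv n 0) = 0 := by
  by_cases hn : 2 ≤ n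
  · rw [xv_eq_X ⟨hn, n.zero_le⟩, Dinf_X, if_pos rfl]
  · rw [xv_of_lt_two _ (by omega), map_zero]

lemma Derivation.eq_zero_of_mem_SAlg (δ : Derivation ℚ Rinf Rinf) (hδ : ∀ n, δ (xv n 0) = 0)
    {s : Rinf} (hs : s ∈ SAlg) : δ s = 0 :=
  Derivation.eqOn_adjoin (D2 := 0) (by rintro _ ⟨n, -, rfl⟩; exact hδ n) hs

lemma mem_W_zero_of_mem_SAlg {s : Rinf} (hs : s ∈ SAlg) : s ∈ W 0 := by
  induction hs using Algebra.adjoin_induction with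
  | mem x hx => obtain ⟨n, -, rfl⟩ := hx; exact xv_mem_W n 0
  | algebraMap r => exact isWeightedHomogeneous_C wt r
  | add x y _ _ hx hy => exact Submodule.add_mem _ hx hy
  | mul x y _ _ hx hy => exact mul_mem_W hx hy

def DW3 : Submodule ℚ Rinf := (W 3).map Dinf.toLinearMap

lemma Dinf_mem_DW3 {g : Rinf} (hg : g ∈ W 3) : Dinf g ∈ DW3 := ⟨g, hg, rfl⟩

lemma mul_mem_DW3 {s f : Rinf} (hs : s ∈ SAlg) (hf : f ∈ DW3) : s * f ∈ DW3 := by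
  obtain ⟨g, hg, rfl⟩ := hf
  have hDs : Dinf s = 0 := Dinf.eq_zero_of_mem_SAlg Dinf_xv_zero hs
  refine ⟨s * g, mul_mem_W (mem_W_zero_of_mem_SAlg hs) hg, ?_⟩
  simp [Derivation.leibniz, hDs]

lemma xv_two_mem_DW3 {n : ℕ} (hn : 3 ≤ n) : xv n 2 ∈ DW3 := by
  simpa [Dinf_xv_succ (show 2 < n by omega)] using Dinf_mem_DW3 (xv_mem_W n 3)

lemma xv_one_mul_xv_one_mem_DW3 {n p : ℕ} (hn : 3 ≤ n) (hp : 1 ≤ p) :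
    xv n 1 * xv p 1 ∈ DW3 := by
  have hD : Dinf (xv n 2 * xv p 1) = xv n 1 * xv p 1 + xv p 0 * xv n 2 := by
    simp only [Derivation.leibniz, smul_eq_mul, Dinf_xv_succ hp,
      Dinf_xv_succ (show 1 < n by omega)]
    ring
  have h := Dinf_mem_DW3 (mul_mem_W (xv_mem_W n 2) (xv_mem_W p 1))
  rw [hD] at h
  simpa using DW3.sub_mem h (mul_mem_DW3 (xv0_mem p) (xv_two_mem_DW3 hn))

lemma xv21_sq_add_mem_DW3 : xv 2 1 ^ 2 + xv 2 0 * xv 2 2 ∈ DW3 := by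
  have hD : Dinf (xv 2 2 * xv 2 1) = xv 2 1 ^ 2 + xv 2 0 * xv 2 2 := by
    simp only [Derivation.leibniz, smul_eq_mul, Dinf_xv_succ (show 1 < 2 by omega),
      Dinf_xv_succ (show 0 < 2 by omega)]
    ring
  simpa [hD] using Dinf_mem_DW3 (mul_mem_W (xv_mem_W 2 2) (xv_mem_W 2 1))

lemma xv_zero_mul_xv22_mem_DW3 {n : ℕ} (hn : 3 ≤ n) : xv n 0 * xv 2 2 ∈ DW3 := by
  have hg : xv 2 2 * xv n 1 - xv 2 1 * xv n 2 + xv 2 0 * xv n 3 ∈ W 3 :=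
    add_mem (sub_mem (mul_mem_W (xv_mem_W 2 2) (xv_mem_W n 1))
      (mul_mem_W (xv_mem_W 2 1) (xv_mem_W n 2))) (mul_mem_W (xv_mem_W 2 0) (xv_mem_W n 3))
  have hD : Dinf (xv 2 2 * xv n 1 - xv 2 1 * xv n 2 + xv 2 0 * xv n 3) = xv n 0 * xv 2 2 := by
    simp only [map_add, map_sub, Derivation.leibniz, smul_eq_mul,
      Dinf_xv_succ (show 1 < 2 by omega), Dinf_xv_succ (show 0 < 2 by omega),
      Dinf_xv_succ (show 2 < n by omega), Dinf_xv_succ (show 1 < n by omega),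
      Dinf_xv_succ (show 0 < n by omega), Dinf_xv_zero]
    ring
  simpa [hD] using Dinf_mem_DW3 hg

lemma xv20_sq_mul_xv22_mem_DW3 : xv 2 0 ^ 2 * xv 2 2 ∈ DW3 := by
  have hg : 3 • (xv 2 0 * (xv 2 1 * xv 2 2)) - xv 2 1 * (xv 2 1 * xv 2 1) ∈ W 3 :=
    sub_mem (nsmul_mem (mul_mem_W (xv_mem_W 2 0) (mul_mem_W (xv_mem_W 2 1) (xv_mem_W 2 2))) 3)
      (mul_mem_W (xv_mem_W 2 1) (mul_mem_W (xv_mem_W 2 1) (xv_mem_W 2 1)))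
  have hD : Dinf (3 • (xv 2 0 * (xv 2 1 * xv 2 2)) - xv 2 1 * (xv 2 1 * xv 2 1))
      = 3 • (xv 2 0 ^ 2 * xv 2 2) := by
    rw [map_sub, map_nsmul]
    simp only [Derivation.leibniz, smul_eq_mul, Dinf_xv_succ (show 1 < 2 by omega),
      Dinf_xv_succ (show 0 < 2 by omega), Dinf_xv_zero]
    ring
  have h := Dinf_mem_DW3 hg
  rwa [hD, ← Nat.cast_smul_eq_nsmul ℚ, Submodule.smul_mem_iff _ (by norm_num)] at h

def DW3Sx22 : Submodule ℚ Rinf :=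
  DW3 ⊔ (Subalgebra.toSubmodule SAlg).map (LinearMap.mulRight ℚ (xv 2 2))

lemma mem_DW3Sx22 {f : Rinf} : f ∈ DW3Sx22 ↔ ∃ s : SAlg, f - s * xv 2 2 ∈ DW3 := by
  simp only [DW3Sx22, Submodule.mem_sup, Submodule.mem_map, Subalgebra.mem_toSubmodule,
    LinearMap.mulRight_apply]
  constructor
  · rintro ⟨y, hy, _, ⟨s, hs, rfl⟩, rfl⟩
    exact ⟨⟨s, hs⟩, by simpa using hy⟩
  · rintro ⟨s, hs⟩
    exact ⟨_, hs, _, ⟨s, s.2, rfl⟩, sub_add_cancel _ _⟩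

lemma mul_mem_DW3Sx22 {s f : Rinf} (hs : s ∈ SAlg) (hf : f ∈ DW3Sx22) : s * f ∈ DW3Sx22 := by
  obtain ⟨t, ht⟩ := mem_DW3Sx22.mp hf
  refine mem_DW3Sx22.mpr ⟨⟨s, hs⟩ * t, ?_⟩
  simpa [mul_sub, mul_assoc] using mul_mem_DW3 hs ht

lemma X_mem_DW3Sx22 {a : Idx} (ha : wt a = 2) : X a ∈ DW3Sx22 := by
  obtain ⟨⟨n, k⟩, hn, hk⟩ := a
  obtain rfl : k = 2 := ha
  rw [← xv_eq_X]
  rcases (show n = 2 ∨ 3 ≤ n by omega) with rfl | hn3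
  · exact mem_DW3Sx22.mpr ⟨1, by simp⟩
  · exact Submodule.mem_sup_left (xv_two_mem_DW3 hn3)

lemma X_mul_X_mem_DW3Sx22 {a b : Idx} (ha : wt a = 1) (hb : wt b = 1) :
    X a * X b ∈ DW3Sx22 := by
  obtain ⟨⟨n, k⟩, hn, hk⟩ := a
  obtain ⟨⟨p, l⟩, hp, hl⟩ := b
  obtain rfl : k = 1 := ha
  obtain rfl : l = 1 := hb
  rw [← xv_eq_X, ← xv_eq_X]
  rcases (show n = 2 ∨ 3 ≤ n by omega) with rfl | hn3
  · rcases (show p = 2 ∨ 3 ≤ p by omega) with rfl | hp3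
    · exact mem_DW3Sx22.mpr ⟨-eS 2, by simpa [eS, sq] using xv21_sq_add_mem_DW3⟩
    · exact Submodule.mem_sup_left
        (mul_comm (xv p 1) _ ▸ xv_one_mul_xv_one_mem_DW3 hp3 (by omega))
  · exact Submodule.mem_sup_left (xv_one_mul_xv_one_mem_DW3 hn3 (by omega))

lemma monomial_mem_SAlg {u : Idx →₀ ℕ} (hu : Finsupp.weight wt u = 0) (c : ℚ) :
    monomial u c ∈ SAlg := by
  rw [monomial_eq]
  refine mul_mem (Subalgebra.algebraMap_mem SAlg c) (prod_mem fun s hs => pow_mem ?_ _)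
  have hs0 : s.1.2 = 0 := by
    have := Finsupp.le_weight_of_ne_zero' wt (Finsupp.mem_support_iff.mp hs)
    simp only [wt] at this
    omega
  rw [X_eq_xv, hs0]
  exact xv0_mem _

lemma exists_monomial_eq_X_mul {u : Idx →₀ ℕ} (hu : Finsupp.weight wt u ≠ 0) (c : ℚ) :
    ∃ a : Idx, 1 ≤ wt a ∧
      Finsupp.weight wt (u - Finsupp.single a 1) + wt a = Finsupp.weight wt u ∧
      monomial u c = X a * monomial (u - Finsupp.single a 1) c := by
  obtain ⟨a, ha, hwa⟩ : ∃ a ∈ u.support, wt a ≠ 0 := by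
    by_contra! h
    exact hu (Finset.sum_eq_zero fun s hs => by simp [h s hs])
  have hsplit : Finsupp.single a 1 + (u - Finsupp.single a 1) = u :=
    add_tsub_cancel_of_le (Finsupp.single_le_iff.mpr (Nat.one_le_iff_ne_zero.mpr
      (Finsupp.mem_support_iff.mp ha)))
  refine ⟨a, Nat.one_le_iff_ne_zero.mpr hwa, ?_, ?_⟩
  · conv_rhs => rw [← hsplit]
    rw [map_add, Finsupp.weight_single, one_smul, add_comm]
  · conv_lhs => rw [← hsplit]
    rw [monomial_single_add, pow_one]

lemma monomial_mem_DW3Sx22 {u : Idx →₀ ℕ} (hu : Finsupp.weight wt u = 2) (c : ℚ) :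
    monomial u c ∈ DW3Sx22 := by
  obtain ⟨a, ha, hwa, hu_eq⟩ := exists_monomial_eq_X_mul (u := u) (by omega) c
  rw [hu_eq, mul_comm]
  rcases (show wt a = 2 ∨ wt a = 1 by omega) with ha2 | ha1
  · exact mul_mem_DW3Sx22 (monomial_mem_SAlg (by omega) c) (X_mem_DW3Sx22 ha2)
  · obtain ⟨b, hb, hwb, hv_eq⟩ := exists_monomial_eq_X_mul (u := u - Finsupp.single a 1)
      (by omega) c
    rw [hv_eq, mul_comm (X b), mul_assoc]
    exact mul_mem_DW3Sx22 (monomial_mem_SAlg (by omega) c) (X_mul_X_mem_DW3Sx22 (by omega) ha1)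

lemma W_two_le_DW3Sx22 : W 2 ≤ DW3Sx22 := fun f hf => by
  rw [← support_sum_monomial_coeff f]
  exact Submodule.sum_mem _ fun u hu => monomial_mem_DW3Sx22 (hf (mem_support_iff.mp hu)) _

def relIdeal : Ideal SAlg :=
  Ideal.span (insert ((eS 2) ^ 2) {g : SAlg | ∃ n, 3 ≤ n ∧ g = eS n})

lemma mul_xv22_mem_DW3_of_mem_relIdeal {s : SAlg} (hs : s ∈ relIdeal) :
    (s : Rinf) * xv 2 2 ∈ DW3 := by
  induction hs using Submodule.span_induction with
  | mem x hx =>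
    rcases hx with rfl | ⟨n, hn, rfl⟩
    · simpa [eS] using xv20_sq_mul_xv22_mem_DW3
    · exact xv_zero_mul_xv22_mem_DW3 hn
  | zero => simp
  | add x y _ _ hx hy => simpa [add_mul] using add_mem hx hy
  | smul a x _ hx => simpa [mul_assoc] using mul_mem_DW3 a.2 hx

lemma pderiv_comm {σ R : Type*} [CommRing R] (i j : σ) (f : MvPolynomial σ R) :
    pderiv i (pderiv j f) = pderiv j (pderiv i f) := by
  classical
  have : ⁅pderiv i, pderiv j⁆ = (0 : Derivation R (MvPolynomial σ R) (MvPolynomial σ R)) :=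
    derivation_ext fun k => by
      rw [Derivation.commutator_apply, pderiv_X, pderiv_X, Pi.single_apply, Pi.single_apply]
      split_ifs <;> simp
  simpa [Derivation.commutator_apply, sub_eq_zero] using congr($this f)

def idx2 (k : Fin 3) : Idx := ⟨(2, k), le_rfl, by omega⟩

lemma constantCoeff_Dinf (f : Rinf) : constantCoeff (Dinf f) = 0 := by
  induction f using MvPolynomial.induction_on with
  | C a => simp [← algebraMap_eq]
  | add p q hp hq => rw [map_add, map_add, hp, hq, add_zero]
  | mul_X p s hp =>
    rw [Derivation.leibniz, Dinf_X]
    split_ifs <;> simp [hp, constantCoeff_xv]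

lemma pderiv_Dinf_X (a s : Idx) :
    pderiv a (Dinf (X s)) = if s.1 = (a.1.1, a.1.2 + 1) then 1 else 0 := by
  obtain ⟨⟨n, k⟩, hn, hk⟩ := s
  rw [Dinf_X]
  rcases k with _ | k
  · simp
  · rw [if_neg (Nat.succ_ne_zero k), Nat.add_sub_cancel, xv_eq_X ⟨hn, by omega⟩, pderiv_X,
      Pi.single_apply]
    simp [Subtype.ext_iff, Prod.ext_iff]

lemma pderiv_Dinf_of_X {a : Idx} (δ : Derivation ℚ Rinf Rinf)
    (hδ : ∀ s : Idx, δ (X s) = if s.1 = (a.1.1, a.1.2 + 1) then 1 else 0) (f : Rinf) :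
    pderiv a (Dinf f) = Dinf (pderiv a f) + δ f := by
  have : ⁅pderiv a, Dinf⁆ = δ := derivation_ext fun s => by
    rw [Derivation.commutator_apply, pderiv_Dinf_X, hδ, pderiv_X, Pi.single_apply]
    split_ifs <;> simp
  rw [← this, Derivation.commutator_apply, add_sub_cancel]

lemma pderiv_Dinf {a b : Idx} (hab : b.1 = (a.1.1, a.1.2 + 1)) (f : Rinf) :
    pderiv a (Dinf f) = Dinf (pderiv a f) + pderiv b f :=
  pderiv_Dinf_of_X (pderiv b) (fun s => by
    simp only [pderiv_X, Pi.single_apply, ← hab, Subtype.ext_iff]) f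

lemma pderiv_Dinf_of_top {a : Idx} (ha : a.1.2 = a.1.1) (f : Rinf) :
    pderiv a (Dinf f) = Dinf (pderiv a f) := by
  simpa using pderiv_Dinf_of_X 0 (fun s => by
    rw [if_neg fun h => by have := s.2.2; rw [h] at this; omega]; rfl) f

lemma pderiv_eq_zero_of_mem_SAlg {a : Idx} (ha : a.1.2 ≠ 0) {s : Rinf} (hs : s ∈ SAlg) :
    pderiv a s = 0 :=
  (pderiv a).eq_zero_of_mem_SAlg (fun n => by
    by_cases hn : 2 ≤ n
    · rw [xv_eq_X ⟨hn, n.zero_le⟩, pderiv_X_of_ne fun h => ha (by rw [← h])]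
    · rw [xv_of_lt_two _ (by omega), map_zero]) hs

local notation "∂" k => pderiv (idx2 k)

lemma constantCoeff_eq_zero_of_mul_xv22_eq_Dinf {s g : Rinf} (hs : s ∈ SAlg)
    (h : s * xv 2 2 = Dinf g) :
    constantCoeff s = 0 ∧ constantCoeff ((∂ 0) s) = 0 := by
  have d10 : ∀ f, (∂ 0) (Dinf f) = Dinf ((∂ 0) f) + (∂ 1) f := pderiv_Dinf rfl
  have d21 : ∀ f, (∂ 1) (Dinf f) = Dinf ((∂ 1) f) + (∂ 2) f := pderiv_Dinf rfl
  have d2 : ∀ f, (∂ 2) (Dinf f) = Dinf ((∂ 2) f) := pderiv_Dinf_of_top rfl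
  have hs1 : (∂ 1) s = 0 := pderiv_eq_zero_of_mem_SAlg one_ne_zero hs
  have hs2 : (∂ 2) s = 0 := pderiv_eq_zero_of_mem_SAlg two_ne_zero hs
  have hx : xv 2 2 = X (idx2 2) := xv_eq_X _
  have h2 : (∂ 2) (s * xv 2 2) = s := by simp [hs2, hx]
  have h1 : (∂ 1) (s * xv 2 2) = 0 := by
    simp [hs1, hx, pderiv_X_of_ne (show idx2 2 ≠ idx2 1 by decide)]
  have hmix : constantCoeff ((∂ 0) s) = constantCoeff ((∂ 1) ((∂ 2) g)) := by
    rw [← h2, h, d2, d10, map_add, constantCoeff_Dinf, zero_add]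
  have hsq : 2 * constantCoeff ((∂ 1) ((∂ 2) g)) = 0 := by
    have := congr(constantCoeff ((∂ 1) $h1))
    rw [h, d21, map_add, d21, pderiv_comm (idx2 2) (idx2 1)] at this
    simpa [constantCoeff_Dinf, two_mul] using this
  refine ⟨?_, by simpa [hmix] using hsq⟩
  rw [← h2, h, d2, constantCoeff_Dinf]

lemma constantCoeff_eq_zero_of_mem_relIdeal {s : SAlg} (hs : s ∈ relIdeal) :
    constantCoeff (s : Rinf) = 0 ∧ constantCoeff ((∂ 0) (s : Rinf)) = 0 := by
  induction hs using Submodule.span_induction with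
  | mem x hx =>
    rcases hx with rfl | ⟨n, hn, rfl⟩
    · simp [eS, constantCoeff_xv]
    · change constantCoeff (xv n 0) = 0 ∧ constantCoeff ((∂ 0) (xv n 0)) = 0
      rw [xv_eq_X ⟨by omega, n.zero_le⟩,
        pderiv_X_of_ne (ne_of_apply_ne (fun t : Idx => t.1.1) (show n ≠ 2 by omega))]
      simp
  | zero => simp
  | add x y _ _ hx hy => simp [hx, hy]
  | smul a x _ hx => simp [hx]

lemma exists_mk_relIdeal_eq (s : SAlg) : ∃ c₀ c₁ : ℚ,
    Ideal.Quotient.mkₐ ℚ relIdeal s =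
      algebraMap ℚ _ c₀ + algebraMap ℚ _ c₁ * Ideal.Quotient.mkₐ ℚ relIdeal (eS 2) := by
  set π := Ideal.Quotient.mkₐ ℚ relIdeal
  have hε : π (eS 2) ^ 2 = 0 := by
    rw [← map_pow]
    exact Ideal.Quotient.eq_zero_iff_mem.mpr (Ideal.subset_span (Set.mem_insert _ _))
  obtain ⟨s, hs⟩ := s
  induction hs using Algebra.adjoin_induction with
  | mem x hx =>
    obtain ⟨n, hn, rfl⟩ := hx
    rcases (show n = 2 ∨ 3 ≤ n by omega) with rfl | hn3
    · exact ⟨0, 1, by simp [eS]⟩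
    · refine ⟨0, 0, ?_⟩
      have : π (eS n) = 0 := Ideal.Quotient.eq_zero_iff_mem.mpr
        (Ideal.subset_span (Set.mem_insert_of_mem _ ⟨n, hn3, rfl⟩))
      simpa [eS] using this
  | algebraMap r => exact ⟨r, 0, by rw [map_zero, zero_mul, add_zero]; exact π.commutes r⟩
  | add x y hx hy ihx ihy =>
    obtain ⟨c₀, c₁, hx'⟩ := ihx
    obtain ⟨d₀, d₁, hy'⟩ := ihy
    refine ⟨c₀ + d₀, c₁ + d₁, ?_⟩
    rw [show (⟨x + y, _⟩ : SAlg) = ⟨x, hx⟩ + ⟨y, hy⟩ from rfl, map_add, hx', hy', map_add,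
      map_add]
    ring
  | mul x y hx hy ihx ihy =>
    obtain ⟨c₀, c₁, hx'⟩ := ihx
    obtain ⟨d₀, d₁, hy'⟩ := ihy
    refine ⟨c₀ * d₀, c₀ * d₁ + c₁ * d₀, ?_⟩
    rw [show (⟨x * y, _⟩ : SAlg) = ⟨x, hx⟩ * ⟨y, hy⟩ from rfl, map_mul, hx', hy']
    simp only [map_mul, map_add]
    linear_combination (algebraMap ℚ _ c₁ * algebraMap ℚ _ d₁) * hε

lemma mem_relIdeal_of_constantCoeff_eq_zero {s : SAlg} (h₀ : constantCoeff (s : Rinf) = 0)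
    (h₁ : constantCoeff ((∂ 0) (s : Rinf)) = 0) : s ∈ relIdeal := by
  obtain ⟨c₀, c₁, hc⟩ := exists_mk_relIdeal_eq s
  rw [← AlgHom.commutes (Ideal.Quotient.mkₐ ℚ relIdeal) c₀,
    ← AlgHom.commutes (Ideal.Quotient.mkₐ ℚ relIdeal) c₁, ← map_mul, ← map_add,
    Ideal.Quotient.mkₐ_eq_mk, Ideal.Quotient.mk_eq_mk_iff_sub_mem] at hc
  obtain ⟨hd₀, hd₁⟩ := constantCoeff_eq_zero_of_mem_relIdeal hc
  have hx : xv 2 0 = X (idx2 0) := xv_eq_X _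
  obtain rfl : c₀ = 0 := by simpa [eS, h₀, hx] using hd₀
  obtain rfl : c₁ = 0 := by simpa [eS, h₁, hx] using hd₁
  simpa using hc

/-- The `S`-module map `S → R_∞^{(2)}/D_∞(R_∞^{(3)})`, `s ↦ [s·x_{2,2}]`, is surjective with
kernel the ideal of `S` generated by `x_{2,0}²` and the `x_{n,0}` with `n ≥ 3`; hence
`R_∞^{(2)}/D_∞(R_∞^{(3)}) ≅ S/(x_{2,0}², x_{n,0} : n ≥ 3)` (the computation of
`H_st^even(Λ³H̃_ℚ)`). -/
theorem statement13 :
    (∀ f ∈ W 2, ∃ s : SAlg,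
        f - (s : Rinf) * xv 2 2 ∈ Submodule.map Dinf.toLinearMap (W 3)) ∧
    (∀ s : SAlg,
        ((s : Rinf) * xv 2 2 ∈ Submodule.map Dinf.toLinearMap (W 3)) ↔
          s ∈ Ideal.span (insert ((eS 2) ^ 2) {g : SAlg | ∃ n, 3 ≤ n ∧ g = eS n})) := by
  refine ⟨fun f hf => mem_DW3Sx22.mp (W_two_le_DW3Sx22 hf), fun s => ⟨fun h => ?_,
    mul_xv22_mem_DW3_of_mem_relIdeal⟩⟩
  obtain ⟨g, -, hg⟩ := h
  obtain ⟨h₀, h₁⟩ := constantCoeff_eq_zero_of_mul_xv22_eq_Dinf s.2 hg.symm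
  exact mem_relIdeal_of_constantCoeff_eq_zero h₀ h₁

end
end
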